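/- arXiv:1107.0557 — 4 statements merged into one kernel-verified Lean document; each statement's English description precedes it below -/
import Mathlib

section
/- Let M be a right R-module of injective dimension at most 1. If for every countable family (M_i)_{i<ω} of right R-modules the canonical map ⨁_{i<ω} Ext¹_R(M_i, M) → Ext¹_R(∏_{i<ω} M_i, M) is an isomorphism, then M is injective. -/
open CategoryTheory CategoryTheory.Limits Opposite

noncomputable section

/-- The category of right `R`-modules. -/
abbrev RMod (R : Type) [Ring R] := ModuleCat.{0} Rᵐᵒᵖ

/-- `R` as a right module over itself. -/
abbrev regR (R : Type) [Ring R] : RMod R := ModuleCat.of Rᵐᵒᵖ R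

/-- The covariant functor `Ext¹_R(M, -)` (more generally `Extⁿ_R(M, -)`). -/
abbrev extFun (R : Type) [Ring R] (n : ℕ) (M : RMod R) : RMod R ⥤ ModuleCat ℤ :=
  (Ext ℤ (RMod R) n).obj (op M)

/-- `Ext¹_R(M,-)` commutes with direct limits (direct systems over directed sets). -/
def CommutesWithDirectLimits (R : Type) [Ring R] (M : RMod R) : Prop :=
  ∀ (J : Type) [Preorder J] [IsDirected J (· ≤ ·)] [Nonempty J],
    PreservesColimitsOfShape J (extFun R 1 M)

/-- `Ext¹_R(M,-)` commutes with direct sums. -/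
def CommutesWithDirectSums (R : Type) [Ring R] (M : RMod R) : Prop :=
  ∀ (ι : Type), PreservesColimitsOfShape (Discrete ι) (extFun R 1 M)

/-- `Extⁿ_R(M,-)` commutes with direct sums of copies of `R`: the canonical map
`Extⁿ_R(M,R)^{(ι)} → Extⁿ_R(M,R^{(ι)})` is an isomorphism for every index set `ι`. -/
def CommutesWithSumsOfR (R : Type) [Ring R] (n : ℕ) (M : RMod R) : Prop :=
  ∀ (ι : Type), IsIso (Sigma.desc
    (fun i : ι => (extFun R n M).map (Sigma.ι (fun _ : ι => regR R) i)))

/-- A module `K` is small iff `Hom_R(K,-)` commutes with direct sums. -/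
def IsSmallModule (R : Type) [Ring R] (K : RMod R) : Prop :=
  ∀ (ι : Type), PreservesColimitsOfShape (Discrete ι) (preadditiveCoyoneda.obj (op K))

/-- `M` has a short exact sequence `0 → K → P → M → 0` with `P` projective and `K`
satisfying the property `Q` (e.g. `M` is fp-Ω¹, fg-Ω¹ or small-Ω¹). -/
def IsOmega1 (R : Type) [Ring R] (Q : RMod R → Prop) (M : RMod R) : Prop :=
  ∃ (K P : RMod R) (i : K ⟶ P) (p : P ⟶ M) (w : i ≫ p = 0),
    Mono i ∧ Epi p ∧ (ShortComplex.mk i p w).Exact ∧ Projective P ∧ Q K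

/-- `M` has projective dimension at most 1. -/
def HasProjDimLE1 (R : Type) [Ring R] (M : RMod R) : Prop :=
  ∃ (P₁ P₀ : RMod R) (f : P₁ ⟶ P₀) (p : P₀ ⟶ M) (w : f ≫ p = 0),
    Projective P₁ ∧ Projective P₀ ∧ Mono f ∧ Epi p ∧ (ShortComplex.mk f p w).Exact

/-- `M` is `FP₂`: it admits a projective resolution which is finitely generated in
dimensions `0`, `1` and `2`. -/
def IsFP2 (R : Type) [Ring R] (M : RMod R) : Prop :=
  ∃ (P₂ P₁ P₀ : RMod R) (d₂ : P₂ ⟶ P₁) (d₁ : P₁ ⟶ P₀) (p : P₀ ⟶ M)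
    (w₂ : d₂ ≫ d₁ = 0) (w₁ : d₁ ≫ p = 0),
    Projective P₂ ∧ Projective P₁ ∧ Projective P₀ ∧
    Module.Finite Rᵐᵒᵖ P₂ ∧ Module.Finite Rᵐᵒᵖ P₁ ∧ Module.Finite Rᵐᵒᵖ P₀ ∧
    Epi p ∧ (ShortComplex.mk d₂ d₁ w₂).Exact ∧ (ShortComplex.mk d₁ p w₁).Exact

/-- `M` has injective dimension at most `n`, i.e. `Ext^k(-,M)` vanishes for `k > n`. -/
def HasInjDimLE (R : Type) [Ring R] (n : ℕ) (M : RMod R) : Prop :=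
  ∀ (k : ℕ), n < k → ∀ (N : RMod R), IsZero (((Ext ℤ (RMod R) k).obj (op N)).obj M)


/-!
The sequence `0 → M → E₀ → E₁ → 0` splits as soon as `Ext¹(E₁, M) = 0`, and then `M` is a retract
of the injective module `E₀`. To see that `Ext¹(E₁, M)` vanishes, note that `⨁ E₁ → ∏ E₁` is
injective, so by injectivity of `E₁` the codiagonal `⨁ E₁ → E₁` extends to `H : ∏ E₁ → E₁` with
`H ∘ ιⱼ = id` for every `j`. Given `x ∈ Ext¹(E₁, M)`, the hypothesis writes `H^* x` as the image of a
finitely supported family in `⨁ Ext¹(E₁, M)`; for `j` outside its support `ιⱼ^* H^* x = 0`, while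
`ιⱼ^* H^* x = x`.
-/

universe v

namespace ModuleCat

variable {S : Type*} [Ring S] {ι : Type v}

lemma exists_eq_sum_sigmaι (G : ι → ModuleCat.{v} S) [HasCoproduct G] (z : ↑(∐ G)) :
    ∃ (s : Finset ι) (y : ∀ i, G i), z = ∑ i ∈ s, Sigma.ι G i (y i) := by
  classical
  let e := coprodIsoDirectSum G
  refine ⟨(e.hom z).support, fun i => e.hom z i, ?_⟩
  calc z = e.inv (e.hom z) := by simp
    _ = e.inv (∑ i ∈ (e.hom z).support, DirectSum.of _ i (e.hom z i)) := by
      rw [DirectSum.sum_support_of]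
    _ = _ := by
      rw [map_sum]
      exact Finset.sum_congr rfl fun i _ =>
        ConcreteCategory.congr_hom (lof_coprodIsoDirectSum_inv G i) _

instance mono_sigmaDesc_piι [DecidableEq ι] (G : ι → ModuleCat.{v} S) [HasCoproduct G]
    [HasProduct G] : Mono (Sigma.desc (Pi.ι G)) := by
  rw [mono_iff_injective, injective_iff_map_eq_zero]
  intro z hz
  obtain ⟨s, y, rfl⟩ := exists_eq_sum_sigmaι G z
  have hπ : ∀ j ∈ s, Pi.π G j (Sigma.desc (Pi.ι G) (∑ i ∈ s, Sigma.ι G i (y i))) = y j := by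
    intro j hj
    rw [map_sum, map_sum, Finset.sum_eq_single j]
    · simp [← ConcreteCategory.comp_apply]
    · intro i _ hij
      simp [← ConcreteCategory.comp_apply, Pi.ι_π_of_ne _ hij]
    · exact fun h => absurd hj h
  refine Finset.sum_eq_zero fun j hj => ?_
  rw [← hπ j hj, hz, map_zero, map_zero]

end ModuleCat

section ZeroMorphisms

variable {C : Type*} [Category C] [HasZeroMorphisms C]

lemma CategoryTheory.Injective.exists_piι_comp_eq_id {ι : Type*} [DecidableEq ι] (E : C)
    [Injective E] [HasProduct fun _ : ι => E] [HasCoproduct fun _ : ι => E]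
    [Mono (Limits.Sigma.desc (Pi.ι fun _ : ι => E))] :
    ∃ H : ∏ᶜ (fun _ : ι => E) ⟶ E, ∀ j, Pi.ι _ j ≫ H = 𝟙 E :=
  ⟨Injective.factorThru (Limits.Sigma.desc fun _ => 𝟙 E) (Limits.Sigma.desc (Pi.ι _)),
    fun j => by
      rw [← Sigma.ι_desc (Pi.ι _) j, Category.assoc, Injective.comp_factorThru, Sigma.ι_desc]⟩

lemma isZero_obj_of_isIso_sigmaDesc_map_π {S : Type*} [Ring S] {ι : Type v} [Infinite ι]
    [DecidableEq ι] (F : Cᵒᵖ ⥤ ModuleCat.{v} S) [F.PreservesZeroMorphisms] {E : C}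
    [HasProduct fun _ : ι => E] {H : ∏ᶜ (fun _ : ι => E) ⟶ E} (hH : ∀ j, Pi.ι _ j ≫ H = 𝟙 E)
    [IsIso (Sigma.desc fun i => F.map (Pi.π (fun _ : ι => E) i).op)] :
    IsZero (F.obj (op E)) := by
  set Φ := Sigma.desc fun i => F.map (Pi.π (fun _ : ι => E) i).op
  refine ModuleCat.isZero_iff_subsingleton.mpr (subsingleton_of_forall_eq 0 fun x => ?_)
  obtain ⟨s, y, hy⟩ := ModuleCat.exists_eq_sum_sigmaι _ (inv Φ (F.map H.op x))
  obtain ⟨j, hj⟩ := Infinite.exists_notMem_finset s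
  calc x = F.map (Pi.ι _ j).op (F.map H.op x) := by
        rw [← ConcreteCategory.comp_apply, ← F.map_comp, ← op_comp, hH, op_id, F.map_id]; rfl
    _ = F.map (Pi.ι _ j).op (Φ (∑ i ∈ s, Sigma.ι (fun _ : ι => F.obj (op E)) i (y i))) := by
        rw [← hy, IsIso.inv_hom_id_apply]
    _ = ∑ i ∈ s, F.map (Pi.ι _ j ≫ Pi.π _ i).op (y i) := by
        simp [Φ]
    _ = 0 := Finset.sum_eq_zero fun i hi => by
        rw [Pi.ι_π_of_ne _ (ne_of_mem_of_not_mem hi hj).symm, op_zero, F.map_zero]; rfl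

end ZeroMorphisms

section Ext

open ZeroObject

variable {R : Type*} [Ring R] {C : Type*} [Category C] [Abelian C] [Linear R C]
  [EnoughProjectives C]

instance preservesZeroMorphisms_ext_succ_flip_obj (n : ℕ) (Y : C) :
    ((Ext R C (n + 1)).flip.obj Y).PreservesZeroMorphisms :=
  Functor.preservesZeroMorphisms_of_map_zero_object
    ((isZero_Ext_succ_of_projective 0 Y n).of_iso
      ((Ext R C (n + 1)).flip.obj Y |>.mapIso ((isZero_zero _).iso (isZero_zero C).op))).isoZero

lemma CategoryTheory.ProjectiveResolution.exists_d_comp_eq_of_isZero_ext {X Y : C}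
    (P : ProjectiveResolution X) {n : ℕ} (h : IsZero (((Ext R C (n + 1)).obj (op X)).obj Y)) (m : P.complex.X (n + 1) ⟶ Y)
    (hm : P.complex.d (n + 2) (n + 1) ≫ m = 0) :
    ∃ t : P.complex.X n ⟶ Y, P.complex.d (n + 1) n ≫ t = m := by
  have hexact : ((P.complex.linearYonedaObj R Y).sc' n (n + 1) (n + 2)).Exact := by
    rw [← HomologicalComplex.exactAt_iff' _ _ _ _ (by simp) (by simp),
      HomologicalComplex.exactAt_iff_isZero_homology]
    exact h.of_iso (P.isoExt (n + 1) Y).symm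
  exact (ShortComplex.moduleCat_exact_iff _).1 hexact m hm

lemma CategoryTheory.ShortComplex.ShortExact.nonempty_splitting_of_isZero_ext
    {S : ShortComplex C} (hS : S.ShortExact) (h : IsZero (((Ext R C 1).obj (Opposite.op S.X₃)).obj S.X₁)) :
    Nonempty S.Splitting := by
  have := hS.mono_f
  have := hS.epi_g
  let P := ProjectiveResolution.of S.X₃
  let p : P.complex.X 0 ⟶ S.X₃ := P.π.f 0
  let k := Projective.factorThru p S.g
  have hk : k ≫ S.g = p := Projective.factorThru_comp _ _
  let m := hS.exact.lift (P.complex.d 1 0 ≫ k) (by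
    rw [Category.assoc, hk]; exact P.complex_d_comp_π_f_zero)
  have hm : m ≫ S.f = P.complex.d 1 0 ≫ k := hS.exact.lift_f _ _
  obtain ⟨t, ht⟩ := P.exists_d_comp_eq_of_isZero_ext h m (by
    rw [← cancel_mono S.f, Category.assoc, hm, HomologicalComplex.d_comp_d_assoc, zero_comp,
      zero_comp])
  obtain ⟨s, hs⟩ := CokernelCofork.IsColimit.desc' P.isColimitCokernelCofork (k - t ≫ S.f) (by
    rw [Preadditive.comp_sub, ← Category.assoc, ht, hm, sub_self])
  refine ⟨ShortComplex.Splitting.ofExactOfSection S hS.exact s ?_ hS.mono_f⟩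
  refine Cofork.IsColimit.hom_ext P.isColimitCokernelCofork ?_
  change P.cokernelCofork.π ≫ s ≫ S.g = p ≫ 𝟙 _
  rw [← Category.assoc, hs, Preadditive.sub_comp, hk, Category.assoc, S.zero, comp_zero,
    sub_zero, Category.comp_id]

end Ext

theorem ext1_inverts_countable_products_implies_injective
    (R : Type) [Ring R] (M : RMod R)
    (hM : ∃ (E₀ E₁ : RMod R) (f : M ⟶ E₀) (g : E₀ ⟶ E₁) (w : f ≫ g = 0),
      Injective E₀ ∧ Injective E₁ ∧ Mono f ∧ Epi g ∧ (ShortComplex.mk f g w).Exact)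
    (hc : ∀ (N : ℕ → RMod R),
      IsIso (Sigma.desc
        (fun i => ((Ext ℤ (RMod R) 1).flip.obj M).map ((Pi.π N i).op)))) :
    Injective M := by
  obtain ⟨E₀, E₁, f, g, w, hE₀, hE₁, hf, hg, hexact⟩ := hM
  have hS : (ShortComplex.mk f g w).ShortExact := { exact := hexact }
  obtain ⟨H, hH⟩ := Injective.exists_piι_comp_eq_id (ι := ℕ) E₁
  have := hc fun _ => E₁
  have hExt : IsZero (((Ext ℤ (RMod R) 1).obj (op E₁)).obj M) :=
    isZero_obj_of_isIso_sigmaDesc_map_π ((Ext ℤ (RMod R) 1).flip.obj M) hH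
  obtain ⟨s⟩ := hS.nonempty_splitting_of_isZero_ext hExt
  exact Retract.injective ⟨f, s.r, s.f_r⟩
end
end

section
/- If M is an fp-Ω¹ right R-module, then there exists a projective module L such that M ⊕ L is isomorphic to a direct sum H ⊕ P where H is an FP₂-module and P is projective. Similarly, if M is fg-Ω¹ (resp. small-Ω¹) then M ⊕ L ≅ H ⊕ P with H finitely presented (resp. finitely generated) and P projective, for some projective L. -/
open CategoryTheory CategoryTheory.Limits Opposite

noncomputable section

/-!
Write `F = R^(P)` with its projection onto the projective module `P`; then `F ≅ P ⊕ L` with `L`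
projective, and `0 → K → F → M ⊕ L → 0` is exact. The image of `K` in `F` involves only a finite
set `S` of coordinates: for finitely generated `K` because it is spanned by finitely many vectors,
for small `K` because `Hom(K, R^(ι))` is generated by the maps into single coordinates. Splitting
`F = R^S ⊕ R^(Sᶜ)` then gives `M ⊕ L ≅ R^S/K ⊕ R^(Sᶜ)`, and `H = R^S/K` is finitely generated,
finitely presented when `K` is finitely generated, and `FP₂` when `K` is finitely presented.
-/

open LinearMap Finsupp Submodule

universe u v

section LinearAlgebra

variable {A : Type u} [Ring A] {K U V W : Type*} [AddCommGroup K] [Module A K]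
  [AddCommGroup U] [Module A U] [AddCommGroup V] [Module A V] [AddCommGroup W] [Module A W]

def Submodule.quotientProdBotEquiv (N : Submodule A U) :
    ((U × W) ⧸ N.prod (⊥ : Submodule A W)) ≃ₗ[A] (U ⧸ N) × W :=
  (quotEquivOfEq _ _ (by rw [ker_prodMap, ker_mkQ, ker_id])).trans
    ((N.mkQ.prodMap LinearMap.id).quotKerEquivOfSurjective
      (Prod.map_surjective.2 ⟨N.mkQ_surjective, Function.surjective_id⟩))

def LinearEquiv.quotientRangeEquivOfComp (e : V ≃ₗ[A] U × W) (j : K →ₗ[A] V) (f : K →ₗ[A] U)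
    (h : e.toLinearMap ∘ₗ j = inl A U W ∘ₗ f) : (V ⧸ range j) ≃ₗ[A] (U ⧸ range f) × W :=
  (Submodule.Quotient.equiv _ _ e
    (by rw [← LinearMap.range_comp, h, LinearMap.range_comp, map_inl])).trans
    (quotientProdBotEquiv _)

theorem Module.Projective.exists_linearEquiv_prod {P : Type v} [AddCommGroup P] [Module A P]
    [Module.Projective A P] :
    ∃ (L : Type (max u v)) (_ : AddCommGroup L) (_ : Module A L) (_ : (P →₀ A) ≃ₗ[A] P × L),
      Module.Projective A L := by
  obtain ⟨s, hs⟩ := Module.projective_def'.mp ‹Module.Projective A P›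
  let π : (P →₀ A) →ₗ[A] P := linearCombination A id
  have hπs (x : P) : π (s x) = x := LinearMap.congr_fun hs x
  let r : (P →₀ A) →ₗ[A] ker π :=
    (LinearMap.id - s ∘ₗ π).codRestrict (ker π) fun x => by simp [hπs]
  have hr (l : ker π) : r l = l := Subtype.ext (by simp [r])
  let e : (P →₀ A) ≃ₗ[A] P × ker π :=
    .ofLinearMap (f := π.prod r) (g := s.coprod (ker π).subtype)
      (by ext <;> simp [r, hπs]) (by ext; simp [r])
  exact ⟨ker π, inferInstance, inferInstance, e, .of_split (ker π).subtype r (LinearMap.ext hr)⟩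

variable (A) in
theorem Finsupp.isCompl_supported_compl {ι : Type*} (M : Type*) [AddCommGroup M] [Module A M]
    (S : Set ι) : IsCompl (supported M A S) (supported M A Sᶜ) :=
  ⟨disjoint_supported_supported isCompl_compl.disjoint,
    codisjoint_supported_supported isCompl_compl.codisjoint⟩

theorem Finsupp.exists_finset_range_le_supported {ι M : Type*} [AddCommGroup M] [Module A M]
    [Module.Finite A K] (j : K →ₗ[A] (ι →₀ M)) : ∃ S : Finset ι, range j ≤ supported M A ↑S := by
  classical
  obtain ⟨t, ht⟩ := fg_range j
  rw [← ht]
  refine ⟨t.biUnion fun x : ι →₀ M => x.support, span_le.2 fun x hx => ?_⟩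
  exact supported_mono (Finset.coe_subset.2 (Finset.subset_biUnion_of_mem _ hx))
    (mem_supported_support A x)

theorem exists_linearEquiv_prod_quotient_prod {P : Type v} {M : Type*} [AddCommGroup P]
    [Module A P] [Module.Projective A P] [AddCommGroup M] [Module A M] {i : K →ₗ[A] P}
    {p : P →ₗ[A] M} (hi : Function.Injective i) (hp : Function.Surjective p)
    (hip : Function.Exact i p)
    (hK : ∀ j : K →ₗ[A] (P →₀ A), ∃ S : Finset P, range j ≤ supported A A ↑S) :
    ∃ (S : Set P) (L : Type (max u v)) (_ : AddCommGroup L) (_ : Module A L)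
      (f : K →ₗ[A] (S →₀ A)), S.Finite ∧ Function.Injective f ∧ Module.Projective A L ∧
      Nonempty ((M × L) ≃ₗ[A] ((S →₀ A) ⧸ range f) × (↥Sᶜ →₀ A)) := by
  obtain ⟨L, _, _, e, hL⟩ := Module.Projective.exists_linearEquiv_prod (A := A) (P := P)
  let j := e.symm.toLinearMap ∘ₗ inl A P L ∘ₗ i
  obtain ⟨S, hS⟩ := hK j
  have hSc := isCompl_supported_compl A A (S : Set P)
  let E := (prodEquivOfIsCompl _ _ hSc).symm ≪≫ₗ
    (supportedEquivFinsupp _).prodCongr (supportedEquivFinsupp _)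
  have hjS (k : K) : j k ∈ supported A A ↑S := hS (mem_range_self j k)
  let f := (supportedEquivFinsupp _).toLinearMap ∘ₗ j.codRestrict (supported A A ↑S) hjS
  have hej : e.toLinearMap ∘ₗ j = inl A P L ∘ₗ i := LinearMap.ext fun k => by simp [j]
  have hEj : E.toLinearMap ∘ₗ j = inl A _ _ ∘ₗ f :=
    LinearMap.ext fun k => by simp [E, f, projectionOnto_apply_of_mem_left _ (hjS k), hjS k]; rfl
  have hj : Function.Injective j := e.symm.injective.comp (inl_injective.comp hi)
  refine ⟨S, L, inferInstance, inferInstance, f, S.finite_toSet, ?_, hL, ⟨?_⟩⟩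
  · refine .of_comp (f := inl A _ (↥(S : Set P)ᶜ →₀ A)) ?_
    rw [← coe_comp, ← hEj]
    exact E.injective.comp hj
  exact (hip.linearEquivOfSurjective hp).symm.prodCongr (.refl A L) ≪≫ₗ
      (e.quotientRangeEquivOfComp j i hej).symm ≪≫ₗ E.quotientRangeEquivOfComp j f hEj

end LinearAlgebra

theorem AddCommGrpCat.eq_top_of_isColimit {J : Type*} [Category J] {F : J ⥤ AddCommGrpCat}
    {c : Cocone F} (hc : IsColimit c) (T : AddSubgroup c.pt) (hT : ∀ j x, c.ι.app j x ∈ T) :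
    T = ⊤ := by
  have hq : (AddCommGrpCat.ofHom (QuotientAddGroup.mk' T) : c.pt ⟶ .of (c.pt ⧸ T)) = 0 :=
    hc.hom_ext fun j => by
      ext x
      simpa using hT j x
  exact eq_top_iff.2 fun x _ => (QuotientAddGroup.eq_zero_iff x).1 congr($hq x)

theorem IsSmallModule.exists_finset_range_le_supported {R : Type} [Ring R] {K : RMod R}
    (hK : IsSmallModule R K) (ι : Type) (j : K →ₗ[Rᵐᵒᵖ] (ι →₀ Rᵐᵒᵖ)) :
    ∃ S : Finset ι, range j ≤ supported Rᵐᵒᵖ Rᵐᵒᵖ ↑S := by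
  classical
  let Z : ι → RMod R := fun _ => ModuleCat.of Rᵐᵒᵖ Rᵐᵒᵖ
  let X : RMod R := ModuleCat.of Rᵐᵒᵖ (DirectSum ι fun _ => Rᵐᵒᵖ)
  let inj (i : ι) : Z i ⟶ X := ModuleCat.ofHom (DirectSum.lof Rᵐᵒᵖ ι (fun _ => Rᵐᵒᵖ) i)
  have := hK ι
  let T : AddSubgroup (K ⟶ X) := ⨆ i, (Preadditive.rightComp K (inj i)).range
  have hT : T = ⊤ := AddCommGrpCat.eq_top_of_isColimit
    (isColimitOfPreserves (preadditiveCoyoneda.obj (op K)) (ModuleCat.coproductCoconeIsColimit Z))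
    T fun ⟨i⟩ h => AddSubgroup.mem_iSup_of_mem i ⟨h, rfl⟩
  let e := finsuppLEquivDirectSum Rᵐᵒᵖ Rᵐᵒᵖ ι
  obtain ⟨S, hS⟩ : ∃ S : Finset ι, ∀ k, e.symm (e (j k)) ∈ supported Rᵐᵒᵖ Rᵐᵒᵖ ↑S := by
    refine AddSubgroup.iSup_induction _ (hT ▸ AddSubgroup.mem_top _ :
        (ModuleCat.ofHom (e.toLinearMap ∘ₗ j) : K ⟶ X) ∈ T)
      (C := fun g : K ⟶ X => ∃ S : Finset ι, ∀ k, e.symm (g k) ∈ supported Rᵐᵒᵖ Rᵐᵒᵖ ↑S)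
      ?_ ?_ ?_
    · rintro i _ ⟨h, rfl⟩
      refine ⟨{i}, fun k => ?_⟩
      show e.symm (DirectSum.lof Rᵐᵒᵖ ι _ i (h k)) ∈ _
      rw [finsuppLEquivDirectSum_symm_lof]
      exact single_mem_supported _ _ (Finset.mem_coe.2 (Finset.mem_singleton_self i))
    · exact ⟨∅, fun _ => by simp⟩
    · rintro g₁ g₂ ⟨S₁, h₁⟩ ⟨S₂, h₂⟩
      refine ⟨S₁ ∪ S₂, fun k => ?_⟩
      show e.symm (g₁ k + g₂ k) ∈ _
      rw [map_add, Finset.coe_union, supported_union]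
      exact add_mem_sup (h₁ k) (h₂ k)
  refine ⟨S, ?_⟩
  rintro _ ⟨k, rfl⟩
  simpa using hS k

theorem isFP2_quotient_range {R : Type} [Ring R] {K F : Type} [AddCommGroup K]
    [Module Rᵐᵒᵖ K] [Module.FinitePresentation Rᵐᵒᵖ K] [AddCommGroup F] [Module Rᵐᵒᵖ F]
    [Module.Finite Rᵐᵒᵖ F] [Module.Projective Rᵐᵒᵖ F] {f : K →ₗ[Rᵐᵒᵖ] F}
    (hf : Function.Injective f) : IsFP2 R (ModuleCat.of Rᵐᵒᵖ (F ⧸ range f)) := by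
  obtain ⟨n, m, d, g, hd, hgd⟩ := Module.FinitePresentation.exists_fin' Rᵐᵒᵖ K
  have hex₂ : Function.Exact g (f ∘ₗ d) := hf.comp_exact_iff_exact.2 hgd
  have hex₁ : Function.Exact (f ∘ₗ d) (range f).mkQ :=
    hd.comp_exact_iff_exact.2 (exact_map_mkQ_range f)
  refine ⟨.of Rᵐᵒᵖ (Fin m → Rᵐᵒᵖ), .of Rᵐᵒᵖ (Fin n → Rᵐᵒᵖ), .of Rᵐᵒᵖ F, ModuleCat.ofHom g,
    ModuleCat.ofHom (f ∘ₗ d), ModuleCat.ofHom (range f).mkQ,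
    ModuleCat.hom_ext hex₂.linearMap_comp_eq_zero, ModuleCat.hom_ext hex₁.linearMap_comp_eq_zero,
    (IsProjective.iff_projective _).1 inferInstance,
    (IsProjective.iff_projective _).1 inferInstance,
    (IsProjective.iff_projective _).1 inferInstance, inferInstance, inferInstance, inferInstance,
    (ModuleCat.epi_iff_surjective _).2 (range f).mkQ_surjective,
    (ShortComplex.ShortExact.moduleCat_exact_iff_function_exact _).2 hex₂,
    (ShortComplex.ShortExact.moduleCat_exact_iff_function_exact _).2 hex₁⟩

theorem IsOmega1.exists_biprod_iso {R : Type} [Ring R] {Q : RMod R → Prop} {M : RMod R}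
    (hM : IsOmega1 R Q M) (hQ : ∀ K, Q K → ∀ (ι : Type) (j : K →ₗ[Rᵐᵒᵖ] (ι →₀ Rᵐᵒᵖ)),
      ∃ S : Finset ι, range j ≤ supported Rᵐᵒᵖ Rᵐᵒᵖ ↑S) :
    ∃ (K L W : RMod R) (ι : Type) (_ : Finite ι) (f : K →ₗ[Rᵐᵒᵖ] (ι →₀ Rᵐᵒᵖ)),
      Q K ∧ Function.Injective f ∧ Projective L ∧ Projective W ∧
      Nonempty ((M ⊞ L) ≅ (ModuleCat.of Rᵐᵒᵖ ((ι →₀ Rᵐᵒᵖ) ⧸ range f) ⊞ W)) := by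
  obtain ⟨K, P, i, p, _, hi, hp, hip, hP, hK⟩ := hM
  have : Module.Projective Rᵐᵒᵖ P := (IsProjective.iff_projective P).2 hP
  obtain ⟨S, L, _, _, f, hS, hf, hL, ⟨e⟩⟩ := exists_linearEquiv_prod_quotient_prod
    ((ModuleCat.mono_iff_injective i).1 hi) ((ModuleCat.epi_iff_surjective p).1 hp)
    ((ShortComplex.ShortExact.moduleCat_exact_iff_function_exact _).1 hip) (hQ K hK P)
  let H : RMod R := .of _ ((S →₀ Rᵐᵒᵖ) ⧸ range f)
  let W : RMod R := .of _ (↥Sᶜ →₀ Rᵐᵒᵖ)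
  let e' : (M × L) ≃ₗ[Rᵐᵒᵖ] H × W := e
  exact ⟨K, .of _ L, W, S, hS.to_subtype, f, hK, hf,
    (IsProjective.iff_projective L).1 hL, (IsProjective.iff_projective _).1 inferInstance,
    ⟨ModuleCat.biprodIsoProd M _ ≪≫ e'.toModuleIso ≪≫ (ModuleCat.biprodIsoProd H W).symm⟩⟩

theorem omega1_direct_sum_decomposition (R : Type) [Ring R] (M : RMod R) :
    (IsOmega1 R (fun K => Module.FinitePresentation Rᵐᵒᵖ K) M →
      ∃ (L H P : RMod R), Projective L ∧ IsFP2 R H ∧ Projective P ∧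
        Nonempty ((M ⊞ L) ≅ (H ⊞ P))) ∧
    (IsOmega1 R (fun K => Module.Finite Rᵐᵒᵖ K) M →
      ∃ (L H P : RMod R), Projective L ∧ Module.FinitePresentation Rᵐᵒᵖ H ∧ Projective P ∧
        Nonempty ((M ⊞ L) ≅ (H ⊞ P))) ∧
    (IsOmega1 R (fun K => IsSmallModule R K) M →
      ∃ (L H P : RMod R), Projective L ∧ Module.Finite Rᵐᵒᵖ H ∧ Projective P ∧
        Nonempty ((M ⊞ L) ≅ (H ⊞ P))) := by
  refine ⟨fun hM => ?_, fun hM => ?_, fun hM => ?_⟩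
  · obtain ⟨_, L, W, ι, _, f, _, hf, hL, hW, e⟩ :=
      hM.exists_biprod_iso fun K _ ι j => exists_finset_range_le_supported j
    exact ⟨L, _, W, hL, isFP2_quotient_range hf, hW, e⟩
  · obtain ⟨K, L, W, ι, _, f, hK, -, hL, hW, e⟩ :=
      hM.exists_biprod_iso fun K _ ι j => exists_finset_range_le_supported j
    refine ⟨L, _, W, hL, ?_, hW, e⟩
    exact Module.finitePresentation_of_surjective _ (range f).mkQ_surjective
      (by rw [ker_mkQ]; exact fg_range f)
  · obtain ⟨K, L, W, ι, _, f, -, -, hL, hW, e⟩ :=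
      hM.exists_biprod_iso fun K hK => hK.exists_finset_range_le_supported
    exact ⟨L, _, W, hL, Module.Finite.of_surjective _ (range f).mkQ_surjective, hW, e⟩
end
end

section
/- Let R be a right hereditary ring and M a right R-module. If there is a projective module L with M ⊕ L ≅ F ⊕ U where F is finitely presented and U is projective, then M ≅ N ⊕ P with N finitely presented and P projective. -/
/-!
Transport `e` to an `Rᵐᵒᵖ`-linear isomorphism `ε : M × L ≃ F × U`. Over a ring all of whose
one-sided ideals are projective, submodules of projective modules are projective (Kaplansky).
So the image of `p : M → U`, `m ↦ (ε (m, 0)).2`, is projective and `M ≃ ker p × range p`.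
Through `ε`, `ker p` is identified with the kernel of `φ : F → L`, `f ↦ (ε⁻¹ (f, 0)).2`; since
`range φ ⊆ L` is projective, `ker φ` is a direct summand of the finitely presented `F`.
-/

open CategoryTheory CategoryTheory.Limits Opposite

noncomputable section

/- Kaplansky's argument: for `ι` well-ordered, the `i`-th coefficients of the elements of `N`
supported in `Set.Iic i` form an ideal `Iᵢ`, and sections of these leading-coefficient maps
assemble to an isomorphism `⨁ᵢ Iᵢ ≃ N`. -/
namespace Submodule

variable {S : Type*} [Ring S] {ι : Type*} [LinearOrder ι] (N : Submodule S (ι →₀ S))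

def truncation (i : ι) : Submodule S (ι →₀ S) :=
  N ⊓ Finsupp.supported S S (Set.Iic i)

def leadingCoeff (i : ι) : N.truncation i →ₗ[S] S :=
  Finsupp.lapply i ∘ₗ (N.truncation i).subtype

variable {N}

theorem apply_eq_zero_of_mem_truncation {i j : ι} {x : ι →₀ S} (hx : x ∈ N.truncation i)
    (hij : i < j) : x j = 0 :=
  Finsupp.notMem_support_iff.mp fun hj => hij.not_ge (hx.2 hj)

theorem mem_truncation_max' {x : ι →₀ S} (hx : x ∈ N) (hne : x.support.Nonempty) :
    x ∈ N.truncation (x.support.max' hne) :=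
  ⟨hx, fun j hj => x.support.le_max' j hj⟩

variable (σ : ∀ i, LinearMap.range (N.leadingCoeff i) →ₗ[S] N.truncation i)

def sumOfSections : (Π₀ i, LinearMap.range (N.leadingCoeff i)) →ₗ[S] ι →₀ S :=
  DFinsupp.lsum ℕ fun i => (N.truncation i).subtype ∘ₗ σ i

variable {σ}

theorem sumOfSections_apply_of_forall_lt (hσ : ∀ i y, N.leadingCoeff i (σ i y) = y)
    {x : Π₀ i, LinearMap.range (N.leadingCoeff i)} {i : ι}
    (hx : ∀ j, i < j → x j = 0) : sumOfSections σ x i = x i := by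
  classical
  have hterm : ∀ j ≠ i, ((σ j (x j) : N.truncation j) : ι →₀ S) i = 0 := fun j hji =>
    (lt_or_gt_of_ne hji).elim (apply_eq_zero_of_mem_truncation (σ j (x j)).2)
      fun hij => by simp [hx j hij]
  have hi : ((σ i (x i) : N.truncation i) : ι →₀ S) i = x i := hσ i (x i)
  rw [sumOfSections, DFinsupp.lsum_apply_apply, DFinsupp.sumAddHom_apply, DFinsupp.sum,
    Finsupp.finsetSum_apply]
  refine (Finset.sum_eq_single i (fun j _ => hterm j) fun hi' => ?_).trans hi
  simp [DFinsupp.notMem_support_iff.mp hi']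

theorem sumOfSections_injective (hσ : ∀ i y, N.leadingCoeff i (σ i y) = y) :
    Function.Injective (sumOfSections σ) := by
  classical
  refine (injective_iff_map_eq_zero _).mpr fun x hx => ?_
  by_contra hne
  have hsupp : x.support.Nonempty := Finset.nonempty_iff_ne_empty.mpr (by simpa using hne)
  set i := x.support.max' hsupp
  have hxi : sumOfSections σ x i = x i :=
    sumOfSections_apply_of_forall_lt hσ fun j hij =>
      DFinsupp.notMem_support_iff.mp fun hj => hij.not_ge (x.support.le_max' j hj)
  rw [hx] at hxi
  exact DFinsupp.mem_support_iff.mp (x.support.max'_mem hsupp) (Subtype.ext hxi.symm)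

theorem truncation_le_range_sumOfSections [WellFoundedLT ι]
    (hσ : ∀ i y, N.leadingCoeff i (σ i y) = y) (i : ι) :
    N.truncation i ≤ LinearMap.range (sumOfSections σ) := by
  induction i using WellFoundedLT.induction with
  | ind i ih =>
    intro x hx
    set c : LinearMap.range (N.leadingCoeff i) := (N.leadingCoeff i).rangeRestrict ⟨x, hx⟩
    set y := x - σ i c
    have hy : y ∈ N.truncation i := sub_mem hx (σ i c).2
    have hyi : y i = 0 := by
      simp only [y, Finsupp.sub_apply]
      exact sub_eq_zero.mpr (hσ i c).symm
    have hy_range : y ∈ LinearMap.range (sumOfSections σ) := by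
      rcases y.support.eq_empty_or_nonempty with h | h
      · simp [Finsupp.support_eq_empty.mp h]
      · refine ih _ (lt_of_le_of_ne (hy.2 (y.support.max'_mem h)) fun heq => ?_)
          (mem_truncation_max' hy.1 h)
        exact Finsupp.mem_support_iff.mp (y.support.max'_mem h) (heq ▸ hyi)
    have hc : sumOfSections σ (DFinsupp.single i c) = σ i c := by
      simp [sumOfSections]
    simpa [y, ← hc] using add_mem hy_range (LinearMap.mem_range_self _ (DFinsupp.single i c))

theorem range_sumOfSections [WellFoundedLT ι] (hσ : ∀ i y, N.leadingCoeff i (σ i y) = y) :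
    LinearMap.range (sumOfSections σ) = N := by
  refine le_antisymm ?_ fun x hx => ?_
  · rintro _ ⟨x, rfl⟩
    exact dfinsuppSumAddHom_mem N x _ fun i _ => (σ i (x i)).2.1
  · rcases x.support.eq_empty_or_nonempty with h | h
    · simp [Finsupp.support_eq_empty.mp h]
    · exact truncation_le_range_sumOfSections hσ _ (mem_truncation_max' hx h)

end Submodule

open LinearMap in
theorem LinearMap.nonempty_equiv_ker_prod_range {S M U : Type*} [Ring S] [AddCommGroup M]
    [Module S M] [AddCommGroup U] [Module S U] (p : M →ₗ[S] U) [Module.Projective S (range p)] :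
    Nonempty (M ≃ₗ[S] ker p × range p) := by
  obtain ⟨l, hl⟩ :=
    Module.projective_lifting_property p.rangeRestrict .id p.surjective_rangeRestrict
  have hexact : Function.Exact (ker p).subtype p.rangeRestrict :=
    exact_iff.mpr (by rw [ker_rangeRestrict, Submodule.range_subtype])
  exact ⟨(hexact.splitSurjectiveEquiv (ker p).injective_subtype ⟨l, hl⟩).1⟩

namespace LinearEquiv

open LinearMap

variable {S A B C D : Type*} [Ring S] [AddCommGroup A] [Module S A] [AddCommGroup B] [Module S B]
  [AddCommGroup C] [Module S C] [AddCommGroup D] [Module S D] (ε : (A × B) ≃ₗ[S] (C × D))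

theorem mem_ker_snd_comp_inl {a : A} :
    a ∈ ker (snd S C D ∘ₗ ε.toLinearMap ∘ₗ inl S A B) ↔ (ε (a, 0)).2 = 0 := by
  simp

theorem symm_apply_fst_of_mem_ker {a : A}
    (ha : a ∈ ker (snd S C D ∘ₗ ε.toLinearMap ∘ₗ inl S A B)) :
    ε.symm ((ε (a, 0)).1, 0) = (a, 0) := by
  rw [← ε.mem_ker_snd_comp_inl.mp ha, Prod.mk.eta, symm_apply_apply]

def kerSndInlEquiv : ker (snd S C D ∘ₗ ε.toLinearMap ∘ₗ inl S A B) ≃ₗ[S]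
    ker (snd S A B ∘ₗ ε.symm.toLinearMap ∘ₗ inl S C D) where
  toLinearMap := (fst S C D ∘ₗ ε.toLinearMap ∘ₗ inl S A B).restrict fun _ ha =>
    ε.symm.mem_ker_snd_comp_inl.mpr (congrArg Prod.snd (ε.symm_apply_fst_of_mem_ker ha))
  invFun c := ⟨(ε.symm (c.1, 0)).1,
    ε.mem_ker_snd_comp_inl.mpr (congrArg Prod.snd (ε.symm.symm_apply_fst_of_mem_ker c.2))⟩
  left_inv a := Subtype.ext (congrArg Prod.fst (ε.symm_apply_fst_of_mem_ker a.2))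
  right_inv c := Subtype.ext (congrArg Prod.fst (ε.symm.symm_apply_fst_of_mem_ker c.2))

end LinearEquiv

section Hereditary

open LinearMap

variable {S : Type*} [Ring S]

open Submodule in
theorem Module.projective_of_submodule_finsupp (hS : ∀ I : Ideal S, Module.Projective S I)
    {ι : Type*} [LinearOrder ι] [WellFoundedLT ι] (N : Submodule S (ι →₀ S)) :
    Module.Projective S N := by
  choose σ hσ using fun i => Module.projective_lifting_property
    (N.leadingCoeff i).rangeRestrict .id (N.leadingCoeff i).surjective_rangeRestrict
  have hσ' : ∀ i y, N.leadingCoeff i (σ i y) = y := fun i y =>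
    congrArg Subtype.val (LinearMap.congr_fun (hσ i) y)
  have := fun i => hS (range (N.leadingCoeff i))
  exact .of_equiv ((LinearEquiv.ofInjective _ (sumOfSections_injective hσ')).trans
    (LinearEquiv.ofEq _ _ (range_sumOfSections hσ')))

theorem Module.projective_of_submodule (hS : ∀ I : Ideal S, Module.Projective S I)
    {P : Type*} [AddCommGroup P] [Module S P] [Module.Projective S P]
    (N : Submodule S P) : Module.Projective S N := by
  let : LinearOrder P := IsWellOrder.linearOrder WellOrderingRel
  have : WellFoundedLT P := ⟨WellOrderingRel.isWellOrder.wf⟩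
  obtain ⟨s, hs⟩ := Module.projective_def.mp ‹Module.Projective S P›
  have := Module.projective_of_submodule_finsupp hS (N.map s)
  exact .of_equiv (N.equivMapOfInjective s hs.injective).symm

theorem Module.finitePresentation_ker_of_projective (hS : ∀ I : Ideal S, Module.Projective S I)
    {F L : Type*} [AddCommGroup F] [Module S F] [AddCommGroup L] [Module S L]
    [Module.FinitePresentation S F] [Module.Projective S L]
    (φ : F →ₗ[S] L) : Module.FinitePresentation S (ker φ) := by
  have := Module.projective_of_submodule hS (range φ)
  exact Module.finitePresentation_of_projective_of_exact (ker φ).subtype φ.rangeRestrict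
    (ker φ).injective_subtype φ.surjective_rangeRestrict
    (exact_iff.mpr (by rw [ker_rangeRestrict, Submodule.range_subtype]))

theorem Module.exists_equiv_finitePresentation_prod_projective
    (hS : ∀ I : Ideal S, Module.Projective S I) {M L F U : Type*} [AddCommGroup M] [Module S M]
    [AddCommGroup L] [Module S L] [AddCommGroup F] [Module S F]
    [AddCommGroup U] [Module S U] [Module.Projective S L] [Module.FinitePresentation S F]
    [Module.Projective S U] (ε : (M × L) ≃ₗ[S] (F × U)) :
    ∃ (N : Submodule S F) (P : Submodule S U), Module.FinitePresentation S N ∧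
      Module.Projective S P ∧ Nonempty (M ≃ₗ[S] N × P) := by
  set p := snd S F U ∘ₗ ε.toLinearMap ∘ₗ inl S M L
  have := Module.projective_of_submodule hS (range p)
  obtain ⟨e⟩ := p.nonempty_equiv_ker_prod_range
  exact ⟨_, range p, Module.finitePresentation_ker_of_projective hS _, inferInstance,
    ⟨e.trans (ε.kerSndInlEquiv.prodCongr (.refl S _))⟩⟩

end Hereditary

theorem hereditary_summand_decomposition (R : Type) [Ring R]
    (hher : ∀ (I : Ideal Rᵐᵒᵖ), Module.Projective Rᵐᵒᵖ I)
    (M L F U : RMod R) (hL : Projective L) (hF : Module.FinitePresentation Rᵐᵒᵖ F)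
    (hU : Projective U) (e : Nonempty ((M ⊞ L) ≅ (F ⊞ U))) :
    ∃ (N P : RMod R), Module.FinitePresentation Rᵐᵒᵖ N ∧ Projective P ∧
      Nonempty (M ≅ (N ⊞ P)) := by
  obtain ⟨e⟩ := e
  have := (IsProjective.iff_projective L).mpr hL
  have := (IsProjective.iff_projective U).mpr hU
  obtain ⟨N, P, hN, hP, ⟨ε⟩⟩ := Module.exists_equiv_finitePresentation_prod_projective hher
    ((ModuleCat.biprodIsoProd M L).symm ≪≫ e ≪≫ ModuleCat.biprodIsoProd F U).toLinearEquiv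
  exact ⟨.of _ N, .of _ P, hN, (IsProjective.iff_projective _).mp hP,
    ⟨ε.toModuleIso ≪≫ (ModuleCat.biprodIsoProd (.of _ N) (.of _ P)).symm⟩⟩
end
end

section
/- Let 0 → K → P → M → 0 be an exact sequence of right R-modules with P projective and K small, and let C be a projective module such that P ⊕ C is free, P ⊕ C ≅ R^{(I)}. Then there exists a finite subset J ⊆ I such that M ⊕ C ≅ (R^{(J)}/α(K)) ⊕ R^{(I∖J)}, where α : K → R^{(I)} is the composite embedding; in particular M ⊕ C is the direct sum of a finitely generated module and a free module. -/
open CategoryTheory CategoryTheory.Limits Opposite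

noncomputable section

/-!
Smallness of `K` makes `Hom(K, -)` turn the coproduct `R^{(I)} = ∐ R` into a coproduct of abelian
groups, whose elements are finite sums of elements of the summands; hence the embedding
`K → P ⊕ C ≅ R^{(I)}` lands in `R^{(J)}` for a finite `J ⊆ I`.
Since `R^{(I)} = R^{(J)} ⊕ R^{(I∖J)}`, the cokernel `M ⊕ C` of this embedding splits as
`R^{(J)}/α(K) ⊕ R^{(I∖J)}`.
-/

universe u v

namespace AddCommGrpCat

theorem iSup_range_ι_eq_top {J : Type*} [Category J] {F : J ⥤ AddCommGrpCat.{u}} {c : Cocone F}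
    (hc : IsColimit c) : ⨆ j, AddMonoidHom.range (N := c.pt) (c.ι.app j).hom = ⊤ := by
  set S : AddSubgroup c.pt := ⨆ j, (c.ι.app j).hom.range
  -- The quotient by `S` kills every injection, hence is zero.
  have hmk : ofHom (QuotientAddGroup.mk' S) = 0 :=
    hc.hom_ext fun j => by
      ext x
      exact (QuotientAddGroup.eq_zero_iff _).2 (AddSubgroup.mem_iSup_of_mem j ⟨x, rfl⟩)
  exact eq_top_iff.2 fun x _ => (QuotientAddGroup.eq_zero_iff x).1 congr($hmk x)

end AddCommGrpCat

namespace ModuleCat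

variable {A : Type u} [Ring A]

-- Unlike `ModuleCat.finsuppCocone`, this does not require `A` to be commutative.
def finsuppCofan (M ι : Type v) [AddCommGroup M] [Module A M] :
    Cofan fun _ : ι => ModuleCat.of A M :=
  Cofan.mk (ModuleCat.of A (ι →₀ M)) fun i => ofHom (Finsupp.lsingle i)

def finsuppCofanIsColimit (M ι : Type v) [AddCommGroup M] [Module A M] :
    IsColimit (finsuppCofan (A := A) M ι) :=
  Cofan.IsColimit.mk _ (fun t => ofHom (Finsupp.lsum ℕ fun i => (t.inj i).hom))
    (fun t i => hom_ext (Finsupp.lsum_comp_lsingle ℕ (fun i => (t.inj i).hom) i))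
    (fun t _ hm => hom_ext (Finsupp.lhom_ext' fun i =>
      congr_arg Hom.hom (hm i) |>.trans
        (Finsupp.lsum_comp_lsingle ℕ (fun i => (t.inj i).hom) i).symm))

theorem ofHom_inl_comp_biprodIsoProd_inv (M N : ModuleCat.{v} A) :
    ofHom (LinearMap.inl A M N) ≫ (biprodIsoProd M N).inv = biprod.inl := by
  apply biprod.hom_ext <;> simp [← ofHom_comp]

end ModuleCat

theorem IsSmallModule.exists_finset_range_le_supported_s18 {R : Type} [Ring R] {K : RMod R}
    (hK : IsSmallModule R K) {I : Type} (φ : K ⟶ ModuleCat.of Rᵐᵒᵖ (I →₀ R)) :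
    ∃ J : Finset I, LinearMap.range φ.hom ≤ Finsupp.supported R Rᵐᵒᵖ (J : Set I) := by
  classical
  have := hK I
  have hc := isColimitOfPreserves (preadditiveCoyoneda.obj (op K))
    (ModuleCat.finsuppCofanIsColimit (A := Rᵐᵒᵖ) R I)
  have hφ := (AddCommGrpCat.iSup_range_ι_eq_top hc).symm ▸ AddSubgroup.mem_top φ
  refine AddSubgroup.iSup_induction _ hφ (C := fun φ : K ⟶ ModuleCat.of Rᵐᵒᵖ (I →₀ R) =>
    ∃ J : Finset I, LinearMap.range φ.hom ≤ Finsupp.supported R Rᵐᵒᵖ (J : Set I)) ?_ ?_ ?_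
  · rintro ⟨i⟩ _ ⟨ψ, rfl⟩
    refine ⟨{i}, ?_⟩
    rintro _ ⟨k, rfl⟩
    exact Finsupp.single_mem_supported R _ (by simp)
  · exact ⟨∅, by simp⟩
  · rintro φ₁ φ₂ ⟨J₁, hJ₁⟩ ⟨J₂, hJ₂⟩
    refine ⟨J₁ ∪ J₂, ?_⟩
    rw [ModuleCat.hom_add, Finset.coe_union, Finsupp.supported_union]
    exact (LinearMap.range_add_le _ _).trans (sup_le_sup hJ₁ hJ₂)

section

variable {A : Type u} [Ring A]

namespace Submodule

variable {E : Type v} [AddCommGroup E] [Module A E]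
variable {p q : Submodule A E} (h : IsCompl p q) (N : Submodule A E)

def mkQProdProjectionOnto : E →ₗ[A] (p ⧸ N.comap p.subtype) × q :=
  ((N.comap p.subtype).mkQ ∘ₗ p.projectionOnto q h).prod (q.projectionOnto p h.symm)

theorem mkQProdProjectionOnto_surjective : Function.Surjective (mkQProdProjectionOnto h N) := by
  rintro ⟨a, b⟩
  obtain ⟨y, rfl⟩ := (N.comap p.subtype).mkQ_surjective a
  refine ⟨y + b, ?_⟩
  simp [mkQProdProjectionOnto, projectionOnto_apply_left]

theorem ker_mkQProdProjectionOnto {N : Submodule A E} (hN : N ≤ p) :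
    LinearMap.ker (mkQProdProjectionOnto h N) = N := by
  ext x
  simp only [mkQProdProjectionOnto, LinearMap.ker_prod, mem_inf, LinearMap.mem_ker,
    LinearMap.coe_comp, Function.comp_apply, mkQ_apply, Quotient.mk_eq_zero, mem_comap,
    projectionOnto_apply_eq_zero_iff]
  constructor
  · rintro ⟨hx, hxp⟩
    rwa [projectionOnto_apply_of_mem_left h hxp] at hx
  · intro hx
    exact ⟨by rwa [projectionOnto_apply_of_mem_left h (hN hx)], hN hx⟩

def quotEquivProdOfIsCompl {N : Submodule A E} (hN : N ≤ p) :
    (E ⧸ N) ≃ₗ[A] (p ⧸ N.comap p.subtype) × q :=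
  quotEquivOfEq _ _ (ker_mkQProdProjectionOnto h hN).symm ≪≫ₗ
    (mkQProdProjectionOnto h N).quotKerEquivOfSurjective (mkQProdProjectionOnto_surjective h N)

end Submodule

namespace LinearMap

variable {K P M : Type*} (C : Type*) [AddCommGroup K] [AddCommGroup P] [AddCommGroup M]
  [AddCommGroup C] [Module A K] [Module A P] [Module A M] [Module A C]

theorem range_inl_comp_eq_ker_prodMap {α : K →ₗ[A] P} {β : P →ₗ[A] M}
    (hαβ : range α = ker β) : range (inl A P C ∘ₗ α) = ker (prodMap β (id : C →ₗ[A] C)) := by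
  rw [range_comp, Submodule.map_inl, ker_prodMap, ker_id, hαβ]

def quotRangeInlCompEquiv {α : K →ₗ[A] P} {β : P →ₗ[A] M}
    (hαβ : range α = ker β) (hβ : Function.Surjective β) :
    ((P × C) ⧸ range (inl A P C ∘ₗ α)) ≃ₗ[A] M × C :=
  Submodule.quotEquivOfEq _ _ (range_inl_comp_eq_ker_prodMap C hαβ) ≪≫ₗ
    (prodMap β (id : C →ₗ[A] C)).quotKerEquivOfSurjective (hβ.prodMap Function.surjective_id)

end LinearMap

end

instance (R : Type*) [Semiring R] : Module.Free Rᵐᵒᵖ R :=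
  Module.Free.of_equiv (MulOpposite.opLinearEquiv Rᵐᵒᵖ).symm

instance (R : Type*) [Semiring R] : Module.Finite Rᵐᵒᵖ R :=
  Module.Finite.equiv (MulOpposite.opLinearEquiv Rᵐᵒᵖ).symm

namespace Finsupp

variable {A : Type u} [Semiring A] (M : Type v) [AddCommMonoid M] [Module A M] {α : Type*}

theorem isCompl_supported_compl_s18 (s : Set α) : IsCompl (supported M A s) (supported M A sᶜ) :=
  ⟨disjoint_supported_supported isCompl_compl.disjoint,
    codisjoint_supported_supported isCompl_compl.codisjoint⟩

instance [Module.Free A M] (s : Set α) : Module.Free A (supported M A s) :=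
  Module.Free.of_equiv (supportedEquivFinsupp s).symm

instance [Module.Finite A M] (s : Set α) [Finite s] : Module.Finite A (supported M A s) :=
  Module.Finite.equiv (supportedEquivFinsupp s).symm

end Finsupp

theorem small_syzygy_finite_support_general (R : Type) [Ring R]
    (K P M C : RMod R) (α : K ⟶ P) (β : P ⟶ M) (w : α ≫ β = 0)
    (hβ : Epi β) (hex : (ShortComplex.mk α β w).Exact)
    (hK : IsSmallModule R K)
    (I : Type) (e : (P ⊞ C) ≅ ModuleCat.of Rᵐᵒᵖ (I →₀ R)) :
    ∃ (J : Finset I),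
      LinearMap.range ((α ≫ biprod.inl ≫ e.hom : K ⟶ ModuleCat.of Rᵐᵒᵖ (I →₀ R)).hom :
          ↥K →ₗ[Rᵐᵒᵖ] (I →₀ R)) ≤ Finsupp.supported R Rᵐᵒᵖ (↑J : Set I) ∧
      Nonempty ((M ⊞ C) ≅ ModuleCat.of Rᵐᵒᵖ
        ((@HasQuotient.Quotient _ _ (Submodule.hasQuotient (R := Rᵐᵒᵖ) (M := ↥(Finsupp.supported R Rᵐᵒᵖ (↑J : Set I)))) (
            (LinearMap.range ((α ≫ biprod.inl ≫ e.hom : K ⟶ ModuleCat.of Rᵐᵒᵖ (I →₀ R)).hom :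
                ↥K →ₗ[Rᵐᵒᵖ] (I →₀ R))).comap
              (Finsupp.supported R Rᵐᵒᵖ (↑J : Set I)).subtype)) ×
          ↥(Finsupp.supported R Rᵐᵒᵖ ((↑J : Set I)ᶜ)))) ∧
      Module.Finite Rᵐᵒᵖ
        (@HasQuotient.Quotient _ _ (Submodule.hasQuotient (R := Rᵐᵒᵖ) (M := ↥(Finsupp.supported R Rᵐᵒᵖ (↑J : Set I)))) (
          (LinearMap.range ((α ≫ biprod.inl ≫ e.hom : K ⟶ ModuleCat.of Rᵐᵒᵖ (I →₀ R)).hom :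
              ↥K →ₗ[Rᵐᵒᵖ] (I →₀ R))).comap
            (Finsupp.supported R Rᵐᵒᵖ (↑J : Set I)).subtype)) ∧
      Module.Free Rᵐᵒᵖ ↥(Finsupp.supported R Rᵐᵒᵖ ((↑J : Set I)ᶜ)) := by
  obtain ⟨J, hJ⟩ := hK.exists_finset_range_le_supported_s18 (α ≫ biprod.inl ≫ e.hom)
  let g : (P × C) ≃ₗ[Rᵐᵒᵖ] (I →₀ R) := ((ModuleCat.biprodIsoProd P C).symm ≪≫ e).toLinearEquiv
  have hg : (α ≫ biprod.inl ≫ e.hom).hom =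
      g.toLinearMap ∘ₗ LinearMap.inl Rᵐᵒᵖ P C ∘ₗ α.hom := by
    rw [← ModuleCat.ofHom_inl_comp_biprodIsoProd_inv]
    rfl
  have hαβ : LinearMap.range α.hom = LinearMap.ker β.hom :=
    (ShortComplex.moduleCat_exact_iff_range_eq_ker _).mp hex
  have hβsurj : Function.Surjective β.hom := (ModuleCat.epi_iff_surjective β).mp hβ
  refine ⟨J, hJ, ⟨ModuleCat.biprodIsoProd M C ≪≫ LinearEquiv.toModuleIso ?_⟩,
    Module.Finite.quotient _ _, inferInstance⟩
  exact (LinearMap.quotRangeInlCompEquiv C hαβ hβsurj).symm ≪≫ₗ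
    Submodule.Quotient.equiv _ (LinearMap.range (α ≫ biprod.inl ≫ e.hom).hom) g
      (by rw [hg]; exact (LinearMap.range_comp _ _).symm) ≪≫ₗ
    Submodule.quotEquivProdOfIsCompl
      (Finsupp.isCompl_supported_compl_s18 (A := Rᵐᵒᵖ) R (J : Set I)) hJ

theorem small_syzygy_finite_support (R : Type) [Ring R]
    (K P M C : RMod R) (α : K ⟶ P) (β : P ⟶ M) (w : α ≫ β = 0)
    (hα : Mono α) (hβ : Epi β) (hex : (ShortComplex.mk α β w).Exact)
    (hP : Projective P) (hK : IsSmallModule R K) (hC : Projective C)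
    (I : Type) (e : (P ⊞ C) ≅ ModuleCat.of Rᵐᵒᵖ (I →₀ R)) :
    ∃ (J : Finset I),
      LinearMap.range ((α ≫ biprod.inl ≫ e.hom : K ⟶ ModuleCat.of Rᵐᵒᵖ (I →₀ R)).hom :
          ↥K →ₗ[Rᵐᵒᵖ] (I →₀ R)) ≤ Finsupp.supported R Rᵐᵒᵖ (↑J : Set I) ∧
      Nonempty ((M ⊞ C) ≅ ModuleCat.of Rᵐᵒᵖ
        ((@HasQuotient.Quotient _ _ (Submodule.hasQuotient (R := Rᵐᵒᵖ) (M := ↥(Finsupp.supported R Rᵐᵒᵖ (↑J : Set I)))) (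
            (LinearMap.range ((α ≫ biprod.inl ≫ e.hom : K ⟶ ModuleCat.of Rᵐᵒᵖ (I →₀ R)).hom :
                ↥K →ₗ[Rᵐᵒᵖ] (I →₀ R))).comap
              (Finsupp.supported R Rᵐᵒᵖ (↑J : Set I)).subtype)) ×
          ↥(Finsupp.supported R Rᵐᵒᵖ ((↑J : Set I)ᶜ)))) ∧
      Module.Finite Rᵐᵒᵖ
        (@HasQuotient.Quotient _ _ (Submodule.hasQuotient (R := Rᵐᵒᵖ) (M := ↥(Finsupp.supported R Rᵐᵒᵖ (↑J : Set I)))) (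
          (LinearMap.range ((α ≫ biprod.inl ≫ e.hom : K ⟶ ModuleCat.of Rᵐᵒᵖ (I →₀ R)).hom :
              ↥K →ₗ[Rᵐᵒᵖ] (I →₀ R))).comap
            (Finsupp.supported R Rᵐᵒᵖ (↑J : Set I)).subtype)) ∧
      Module.Free Rᵐᵒᵖ ↥(Finsupp.supported R Rᵐᵒᵖ ((↑J : Set I)ᶜ)) :=
  small_syzygy_finite_support_general R K P M C α β w hβ hex hK I e
end
end
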